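/- arXiv:1902.10936 — 3 statements merged into one kernel-verified Lean document; each statement's English description precedes it below -/
import Mathlib

section
/- Let (∧V, d) be a pure minimal Sullivan algebra with dim V < ∞, with even-degree generators x_1,…,x_p and odd-degree generators y_1,…,y_q. In the relative Sullivan model (∧V⊗∧V⊗∧sV, d) of the multiplication map ∧V⊗∧V → ∧V, any ∧V⊗∧V-linear cocycle η: ∧V⊗∧V⊗∧sV → ∧V⊗∧V satisfying η(sx_1⋯sx_p) = (1⊗y_1 − y_1⊗1)⋯(1⊗y_q − y_q⊗1) represents a nonzero class in Ext_{∧V⊗∧V}(∧V, ∧V⊗∧V). -/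
/-!
Suppose `η = dξ ± ξd` with `ξ` linear over `∧V ⊗ ∧V` and valued in it. Let `N` be the span of
the monomials of `P` involving some generator other than the odd generators `1 ⊗ y_j`. It is an
ideal, and since `P` is free the monomial `(1⊗y_1)⋯(1⊗y_q)` does not lie in it. Purity and
minimality put every `d(v)` in the ideal generated by the `x_i`, so `d` maps `∧V ⊗ ∧V` into `N`.
As `d(sx_i) = 1⊗x_i - x_i⊗1` and the `x_i` are even, hence central, `d(sx_1⋯sx_p)` is a sum of
multiples of the `x_i ⊗ 1` and `1 ⊗ x_i`, which `ξ` sends into `N`. Hence `η(sx_1⋯sx_p) ∈ N`,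
whereas it is `(1⊗y_1)⋯(1⊗y_q)` modulo `N`.
-/

noncomputable section
namespace Brane

/-- The monomial in a generator family indexed by a list. -/
def mon {A G : Type} [Ring A] (gen : G → A) (l : List G) : A := (l.map gen).prod

/-- The degree-`m` component: the `K`-span of monomials of total degree `m`. -/
def grading (K : Type) {A G : Type} [Field K] [Ring A] [Algebra K A]
    (gen : G → A) (dg : G → ℤ) (m : ℤ) : Submodule K A :=
  Submodule.span K {a : A | ∃ l : List G, (l.map dg).sum = m ∧ a = mon gen l}

/-- Graded commutativity on generators (Koszul signs). -/
def GradedComm (K : Type) {A G : Type} [Field K] [Ring A] [Algebra K A]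
    (gen : G → A) (dg : G → ℤ) : Prop :=
  ∀ i j, gen i * gen j = ((-1 : K) ^ (dg i * dg j)) • (gen j * gen i)

/-- `A` is the free graded-commutative algebra on the generators: the reduced sorted
monomials (odd generators appearing at most once) form a `K`-basis. -/
def IsFreeGCAOn (K : Type) {A G : Type} [Field K] [Ring A] [Algebra K A] [LinearOrder G]
    (gen : G → A) (dg : G → ℤ) : Prop :=
  ∃ b : Module.Basis {l : List G // l.Pairwise (· ≤ ·) ∧ ∀ g, Odd (dg g) → l.count g ≤ 1} K A,
    ∀ l, b l = mon gen l.1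

/-- A graded `K`-linear derivation of degree `r` (Koszul sign rule). -/
def IsGradedDer (K : Type) {A G : Type} [Field K] [Ring A] [Algebra K A]
    (gen : G → A) (dg : G → ℤ) (r : ℤ) (D : A →ₗ[K] A) : Prop :=
  (∀ (i : ℤ) (a : A), a ∈ grading K gen dg i → D a ∈ grading K gen dg (i + r)) ∧
  (∀ (i : ℤ) (a b : A), a ∈ grading K gen dg i →
    D (a * b) = D a * b + ((-1 : K) ^ (r * i)) • (a * D b))

/-- A differential: a graded derivation of degree `1` squaring to zero. -/
def IsDifferential (K : Type) {A G : Type} [Field K] [Ring A] [Algebra K A]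
    (gen : G → A) (dg : G → ℤ) (D : A →ₗ[K] A) : Prop :=
  IsGradedDer K gen dg 1 D ∧ ∀ a, D (D a) = 0

/-- The Sullivan (nilpotence) condition. -/
def SullivanCond (K : Type) {A G : Type} [Field K] [Ring A] [Algebra K A]
    (gen : G → A) (D : A →ₗ[K] A) : Prop :=
  ∃ w : G → ℕ, ∀ g, D (gen g) ∈ Algebra.adjoin K (gen '' {g' | w g' < w g})

/-- Decomposable elements (span of monomials of length at least two). -/
def decomposables (K : Type) {A G : Type} [Field K] [Ring A] [Algebra K A]
    (gen : G → A) : Submodule K A :=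
  Submodule.span K {a : A | ∃ l : List G, 2 ≤ l.length ∧ a = mon gen l}



/-- A differential graded module structure over a dga `(A, dA, gA)`. -/
structure DGModData (K A M : Type) [Field K] [Ring A] [Algebra K A]
    [AddCommGroup M] [Module K M] [Module A M] [IsScalarTower K A M]
    (dA : A →ₗ[K] A) (gA : ℤ → Submodule K A) where
  g : ℤ → Submodule K M
  d : M →ₗ[K] M
  d_d : ∀ m, d (d m) = 0
  d_mem : ∀ (i : ℤ) (m : M), m ∈ g i → d m ∈ g (i + 1)
  smul_mem : ∀ (i j : ℤ) (a : A) (m : M), a ∈ gA i → m ∈ g j → a • m ∈ g (i + j)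
  leibniz : ∀ (i : ℤ) (a : A) (m : M), a ∈ gA i →
    d (a • m) = dA a • m + ((-1 : K) ^ i) • (a • d m)
  exhaustive : ∀ m : M, m ∈ Submodule.span K (⋃ i : ℤ, (g i : Set M))

variable {K A M : Type} [Field K] [Ring A] [Algebra K A]
  [AddCommGroup M] [Module K M] [Module A M] [IsScalarTower K A M]
  {dA : A →ₗ[K] A} {gA : ℤ → Submodule K A}

/-- Semifreeness: a free homogeneous `A`-basis filtered so that the differential
lowers the filtration. -/
def IsSemifree (D : DGModData K A M dA gA) : Prop :=
  ∃ (ι : Type) (b : ι → M) (w : ι → ℕ) (dgb : ι → ℤ),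
    LinearIndependent A b ∧ Submodule.span A (Set.range b) = ⊤ ∧
    (∀ i, b i ∈ D.g (dgb i)) ∧
    (∀ i, D.d (b i) ∈ Submodule.span A (b '' {j | w j < w i}))

/-- `M` is a (semifree) resolution of the trivial module `K`: it is semifree and its
cohomology is one-dimensional, concentrated in degree `0`. -/
def IsKResolution (D : DGModData K A M dA gA) : Prop :=
  IsSemifree D ∧
  (∀ n : ℤ, n ≠ 0 → ∀ m ∈ D.g n, D.d m = 0 → ∃ m' ∈ D.g (n - 1), D.d m' = m) ∧
  (∃ z ∈ D.g 0, D.d z = 0 ∧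
    (∀ m' ∈ D.g (-1), D.d m' ≠ z) ∧
    (∀ z' ∈ D.g 0, D.d z' = 0 → ∃ c : K, ∃ m' ∈ D.g (-1), z' - c • z = D.d m'))

/-- An `A`-linear map `M → A` homogeneous of degree `n`. -/
def IsDegHom (D : DGModData K A M dA gA) (n : ℤ) (f : M →ₗ[A] A) : Prop :=
  ∀ (i : ℤ) (m : M), m ∈ D.g i → f m ∈ gA (i + n)

/-- A degree `n` cocycle in the Hom complex `Hom_A(M, A)`. -/
def IsExtCocycle (D : DGModData K A M dA gA) (n : ℤ) (f : M →ₗ[A] A) : Prop :=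
  IsDegHom D n f ∧ ∀ m, dA (f m) = ((-1 : K) ^ n) • f (D.d m)

/-- A degree `n` coboundary in the Hom complex `Hom_A(M, A)`. -/
def IsExtCoboundary (D : DGModData K A M dA gA) (n : ℤ) (f : M →ₗ[A] A) : Prop :=
  ∃ g : M →ₗ[A] A, IsDegHom D (n - 1) g ∧
    ∀ m, f m = dA (g m) - ((-1 : K) ^ (n - 1)) • g (D.d m)

/-- `Ext_A(K, A)` is one-dimensional, concentrated in degree `mdim`:
stated via an arbitrary semifree resolution of `K` over `A`. -/
def ExtOfKIsOneDimAt (dA : A →ₗ[K] A) (gA : ℤ → Submodule K A) (mdim : ℤ) : Prop :=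
  ∀ (M : Type) [AddCommGroup M] [Module K M] [Module A M] [IsScalarTower K A M]
    (D : DGModData K A M dA gA), IsKResolution D →
      (∃ f, IsExtCocycle D mdim f ∧ ¬ IsExtCoboundary D mdim f) ∧
      (∀ (n : ℤ) (f), IsExtCocycle D n f → n ≠ mdim → IsExtCoboundary D n f) ∧
      (∀ f g, IsExtCocycle D mdim f → IsExtCocycle D mdim g →
        ∃ c c' : K, ¬ (c = 0 ∧ c' = 0) ∧ IsExtCoboundary D mdim (c • f - c' • g))

section Monomials

variable {K A G : Type} [Field K] [Ring A] [Algebra K A] (gen : G → A)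

@[simp] lemma mon_nil : mon gen ([] : List G) = 1 := rfl

@[simp] lemma mon_cons (g : G) (l : List G) : mon gen (g :: l) = gen g * mon gen l := by
  simp [mon]

lemma mon_append (l₁ l₂ : List G) : mon gen (l₁ ++ l₂) = mon gen l₁ * mon gen l₂ := by
  simp [mon]

lemma map_mon {P G' : Type} [Ring P] [Algebra K P] (f : A →ₐ[K] P) {gen' : G' → P}
    {e : G → G'} (hf : ∀ g, f (gen g) = gen' (e g)) (l : List G) :
    f (mon gen l) = mon gen' (l.map e) := by
  induction l with
  | nil => simp
  | cons g t ih => simp [ih, hf]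

variable (K) in
def monSpan (Q : List G → Prop) : Submodule K A :=
  Submodule.span K {a | ∃ l, Q l ∧ a = mon gen l}

variable (K) in
def monIdeal (S : Set G) : Submodule K A :=
  monSpan K gen fun l => ∃ g ∈ l, g ∈ S

variable {gen}

lemma mon_mem_monSpan {Q : List G → Prop} {l : List G} (h : Q l) :
    mon gen l ∈ monSpan K gen Q :=
  Submodule.subset_span ⟨l, h, rfl⟩

lemma monSpan_mono {Q Q' : List G → Prop} (h : ∀ l, Q l → Q' l) :
    monSpan K gen Q ≤ monSpan K gen Q' :=
  Submodule.span_mono fun _ ⟨l, hl, he⟩ => ⟨l, h l hl, he⟩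

lemma adjoin_le_monSpan (S : Set G) :
    Subalgebra.toSubmodule (Algebra.adjoin K (gen '' S)) ≤
      monSpan K gen fun l => ∀ g ∈ l, g ∈ S := by
  rw [Algebra.adjoin_eq_span]
  refine Submodule.span_le.mpr fun u hu => ?_
  suffices ∃ l : List G, (∀ g ∈ l, g ∈ S) ∧ u = mon gen l from Submodule.subset_span this
  induction hu using Submonoid.closure_induction with
  | mem _ h =>
    obtain ⟨g, hg, rfl⟩ := h
    exact ⟨[g], by simpa using hg, by simp⟩
  | one => exact ⟨[], by simp, rfl⟩
  | mul _ _ _ _ ha hb =>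
    obtain ⟨l₁, hl₁, rfl⟩ := ha
    obtain ⟨l₂, hl₂, rfl⟩ := hb
    exact ⟨l₁ ++ l₂, by simpa using fun g hg => hg.elim (hl₁ g) (hl₂ g), (mon_append ..).symm⟩

section Span

variable (hspan : Submodule.span K (Set.range (mon gen)) = ⊤)
include hspan

lemma mul_mem_monSpan_left {Q : List G → Prop} (hQ : ∀ l₁ l, Q l → Q (l₁ ++ l)) (a : A)
    {w : A} (hw : w ∈ monSpan K gen Q) : a * w ∈ monSpan K gen Q := by
  have ha : a ∈ Submodule.span K (Set.range (mon gen)) := hspan ▸ Submodule.mem_top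
  have := Submodule.mul_mem_mul ha hw
  rw [monSpan, Submodule.span_mul_span] at this
  refine Submodule.span_le.mpr ?_ this
  rintro _ ⟨_, ⟨l₁, rfl⟩, _, ⟨l, hl, rfl⟩, rfl⟩
  exact Submodule.subset_span ⟨l₁ ++ l, hQ l₁ l hl, (mon_append ..).symm⟩

lemma mul_mem_monSpan_right {Q : List G → Prop} (hQ : ∀ l l₂, Q l → Q (l ++ l₂)) (a : A)
    {w : A} (hw : w ∈ monSpan K gen Q) : w * a ∈ monSpan K gen Q := by
  have ha : a ∈ Submodule.span K (Set.range (mon gen)) := hspan ▸ Submodule.mem_top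
  have := Submodule.mul_mem_mul hw ha
  rw [monSpan, Submodule.span_mul_span] at this
  refine Submodule.span_le.mpr ?_ this
  rintro _ ⟨_, ⟨l, hl, rfl⟩, _, ⟨l₂, rfl⟩, rfl⟩
  exact Submodule.subset_span ⟨l ++ l₂, hQ l l₂ hl, (mon_append ..).symm⟩

variable {S : Set G}

lemma mul_mem_monIdeal_left (a : A) {w : A} (hw : w ∈ monIdeal K gen S) :
    a * w ∈ monIdeal K gen S :=
  mul_mem_monSpan_left hspan (fun _ _ ⟨g, hg, hgS⟩ => ⟨g, List.mem_append_right _ hg, hgS⟩) a hw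

lemma mul_mem_monIdeal_right (a : A) {w : A} (hw : w ∈ monIdeal K gen S) :
    w * a ∈ monIdeal K gen S :=
  mul_mem_monSpan_right hspan (fun _ _ ⟨g, hg, hgS⟩ => ⟨g, List.mem_append_left _ hg, hgS⟩) a hw

lemma gen_mul_mem_monIdeal {g : G} (hg : g ∈ S) (a : A) : gen g * a ∈ monIdeal K gen S := by
  have h : mon gen [g] ∈ monIdeal K gen S := mon_mem_monSpan ⟨g, List.mem_singleton_self g, hg⟩
  rw [mon_cons, mon_nil, mul_one] at h
  exact mul_mem_monIdeal_right hspan a h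

lemma map_mem_monIdeal_of_map_gen_mul {f : A →ₗ[K] A} {X : Set G}
    (hf : ∀ h ∈ X, ∀ z, f (gen h * z) = gen h * f z) (hXS : X ⊆ S) {w : A}
    (hw : w ∈ Submodule.span K {a | ∃ h ∈ X, ∃ z, a = gen h * z}) :
    f w ∈ monIdeal K gen S := by
  have : Submodule.span K {a | ∃ h ∈ X, ∃ z, a = gen h * z} ≤ (monIdeal K gen S).comap f := by
    refine Submodule.span_le.mpr ?_
    rintro _ ⟨h, hh, z, rfl⟩
    show f (gen h * z) ∈ monIdeal K gen S
    rw [hf h hh]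
    exact gen_mul_mem_monIdeal hspan (hXS hh) _
  exact this hw

lemma prod_sub_sub_mon_mem_monIdeal {J : Type} {e₁ e₂ : J → G} (he₁ : ∀ j, e₁ j ∈ S)
    (l : List J) :
    (l.map fun j => gen (e₂ j) - gen (e₁ j)).prod - mon gen (l.map e₂) ∈ monIdeal K gen S := by
  induction l with
  | nil => simp
  | cons j t ih =>
    have key : (gen (e₂ j) - gen (e₁ j)) * (t.map fun j => gen (e₂ j) - gen (e₁ j)).prod -
          gen (e₂ j) * mon gen (t.map e₂) =
        gen (e₂ j) * ((t.map fun j => gen (e₂ j) - gen (e₁ j)).prod - mon gen (t.map e₂)) -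
          gen (e₁ j) * (t.map fun j => gen (e₂ j) - gen (e₁ j)).prod := by
      noncomm_ring
    simpa only [List.map_cons, List.prod_cons, mon_cons, key] using
      Submodule.sub_mem _ (mul_mem_monIdeal_left hspan _ ih) (gen_mul_mem_monIdeal hspan (he₁ j) _)

end Span

lemma map_mem_monIdeal {P G' : Type} [Ring P] [Algebra K P] (f : A →ₐ[K] P)
    {gen' : G' → P} {e : G → G'} (hf : ∀ g, f (gen g) = gen' (e g)) {S : Set G} {S' : Set G'}
    (hS : ∀ g ∈ S, e g ∈ S') {w : A} (hw : w ∈ monIdeal K gen S) :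
    f w ∈ monIdeal K gen' S' := by
  have : monIdeal K gen S ≤ (monIdeal K gen' S').comap f.toLinearMap := by
    refine Submodule.span_le.mpr ?_
    rintro _ ⟨l, ⟨g, hg, hgS⟩, rfl⟩
    show f (mon gen l) ∈ monIdeal K gen' S'
    rw [map_mon gen f hf]
    exact mon_mem_monSpan ⟨e g, List.mem_map_of_mem hg, hS g hgS⟩
  exact this hw

end Monomials

section FreeGCA

variable {K A G : Type} [Field K] [Ring A] [Algebra K A] {gen : G → A} {dg : G → ℤ}

lemma gen_mul_gen_comm_of_even (hcomm : GradedComm K gen dg) (g : G) {h : G}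
    (hh : Even (dg h)) : gen g * gen h = gen h * gen g := by
  rw [hcomm g h, (hh.mul_left _).neg_one_zpow, one_smul]

lemma gen_mul_self_of_odd [NeZero (2 : K)] (hcomm : GradedComm K gen dg) {g : G}
    (hg : Odd (dg g)) : gen g * gen g = 0 := by
  have h := hcomm g g
  rw [(hg.mul hg).neg_one_zpow, neg_one_smul, eq_neg_iff_add_eq_zero, ← two_smul K] at h
  exact (smul_eq_zero.mp h).resolve_left two_ne_zero

variable [LinearOrder G]

abbrev SortedReduced (dg : G → ℤ) : Type :=
  {l : List G // l.Pairwise (· ≤ ·) ∧ ∀ g, Odd (dg g) → l.count g ≤ 1}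

lemma mon_orderedInsert (hcomm : GradedComm K gen dg) (g : G) :
    ∀ l : List G, ∃ c : K, c ≠ 0 ∧ mon gen (g :: l) = c • mon gen (l.orderedInsert (· ≤ ·) g)
  | [] => ⟨1, one_ne_zero, by simp⟩
  | h :: t => by
    by_cases hgh : g ≤ h
    · exact ⟨1, one_ne_zero, by simp [hgh]⟩
    obtain ⟨c, hc, ht⟩ := mon_orderedInsert hcomm g t
    refine ⟨(-1) ^ (dg g * dg h) * c, mul_ne_zero (zpow_ne_zero _ (by norm_num)) hc, ?_⟩
    rw [List.orderedInsert_cons, if_neg hgh, mon_cons, mon_cons, mon_cons, ← mul_assoc,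
      hcomm g h, smul_mul_assoc, mul_assoc, ← mon_cons, ht, mul_smul_comm, smul_smul]

lemma mon_insertionSort (hcomm : GradedComm K gen dg) :
    ∀ l : List G, ∃ c : K, c ≠ 0 ∧ mon gen l = c • mon gen (l.insertionSort (· ≤ ·))
  | [] => ⟨1, one_ne_zero, by simp⟩
  | g :: t => by
    obtain ⟨c, hc, ht⟩ := mon_insertionSort hcomm t
    obtain ⟨c', hc', hg⟩ := mon_orderedInsert hcomm g (t.insertionSort (· ≤ ·))
    refine ⟨c * c', mul_ne_zero hc hc', ?_⟩
    rw [mon_cons, ht, mul_smul_comm, ← mon_cons, hg, smul_smul, List.insertionSort_cons]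

lemma mon_eq_zero_of_two_le_count [NeZero (2 : K)] (hcomm : GradedComm K gen dg) {g : G}
    (hg : Odd (dg g)) : ∀ l : List G, l.Pairwise (· ≤ ·) → 2 ≤ l.count g → mon gen l = 0
  | [], _, hcount => by simp at hcount
  | h :: t, hs, hcount => by
    rw [List.pairwise_cons] at hs
    by_cases ht : 2 ≤ t.count g
    · rw [mon_cons, mon_eq_zero_of_two_le_count hcomm hg t hs.2 ht, mul_zero]
    obtain rfl : h = g := by
      by_contra hne
      exact ht (by rwa [List.count_cons_of_ne hne] at hcount)
    -- `g` occurs again in the sorted tail `t`, so `t` starts with `g`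
    obtain ⟨t', rfl⟩ : ∃ t', t = h :: t' := by
      have hmem : h ∈ t := List.count_pos_iff.mp (by rw [List.count_cons_self] at hcount; omega)
      match t, hmem, hs with
      | a :: t', hmem, hs =>
        refine ⟨t', ?_⟩
        rcases List.mem_cons.mp hmem with rfl | hmem'
        · rfl
        · exact congrArg (· :: t') (le_antisymm ((List.pairwise_cons.mp hs.2).1 h hmem')
            (hs.1 a (List.mem_cons_self ..)))
    rw [mon_cons, mon_cons, ← mul_assoc, gen_mul_self_of_odd hcomm hg, zero_mul]

lemma span_range_mon_eq_top
    {b : Module.Basis (SortedReduced dg) K A}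
    (hb : ∀ l, b l = mon gen l.1) : Submodule.span K (Set.range (mon gen)) = ⊤ :=
  top_le_iff.mp <| b.span_eq ▸
    Submodule.span_mono (Set.range_subset_iff.mpr fun l₀ => ⟨l₀.1, (hb l₀).symm⟩)

variable [NeZero (2 : K)] (hcomm : GradedComm K gen dg)
  {b : Module.Basis (SortedReduced dg) K A}
  (hb : ∀ l, b l = mon gen l.1)
include hcomm hb

lemma repr_mon_eq_zero {l : List G} {l₀ : SortedReduced dg}
    (h : ¬ l.Perm l₀.1) : b.repr (mon gen l) l₀ = 0 := by
  obtain ⟨c, -, hc⟩ := mon_insertionSort hcomm l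
  have hperm := List.perm_insertionSort (· ≤ ·) l
  have hsorted := List.pairwise_insertionSort (· ≤ ·) l
  by_cases hred : ∀ g, Odd (dg g) → (l.insertionSort (· ≤ ·)).count g ≤ 1
  · have hne : l₀ ≠ ⟨_, hsorted, hred⟩ := fun h' => h (by rw [h']; exact hperm.symm)
    rw [hc, ← hb ⟨_, hsorted, hred⟩, map_smul, b.repr_self, Finsupp.smul_apply,
      Finsupp.single_eq_of_ne hne, smul_zero]
  · push Not at hred
    obtain ⟨g, hg, hcount⟩ := hred
    rw [hc, mon_eq_zero_of_two_le_count hcomm hg _ hsorted hcount, smul_zero, map_zero,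
      Finsupp.zero_apply]

section PermInvariant

variable {Q : List G → Prop} (hQ : ∀ l l', l.Perm l' → Q l → Q l')
include hQ

lemma mem_monSpan_iff {w : A} : w ∈ monSpan K gen Q ↔ ∀ l₀, b.repr w l₀ ≠ 0 → Q l₀.1 := by
  constructor
  · intro hw l₀ hl₀
    by_contra hQl₀
    have hker : monSpan K gen Q ≤ LinearMap.ker (b.coord l₀) := by
      refine Submodule.span_le.mpr ?_
      rintro _ ⟨l, hl, rfl⟩
      exact repr_mon_eq_zero hcomm hb fun hperm => hQl₀ (hQ _ _ hperm hl)
    exact hl₀ (LinearMap.mem_ker.mp (hker hw))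
  · intro h
    refine Submodule.span_mono ?_ (b.mem_span_repr_support w)
    rintro _ ⟨l₀, hl₀, rfl⟩
    exact ⟨l₀.1, h l₀ (Finsupp.mem_support_iff.mp hl₀), hb l₀⟩

lemma mon_notMem_monSpan {l : List G} (hl : l.Nodup) (hQl : ¬ Q l) :
    mon gen l ∉ monSpan K gen Q := by
  intro hmem
  obtain ⟨c, hc, hmon⟩ := mon_insertionSort hcomm l
  have hperm := List.perm_insertionSort (· ≤ ·) l
  let l₀ : SortedReduced dg :=
    ⟨_, List.pairwise_insertionSort (· ≤ ·) l,
      fun g _ => List.nodup_iff_count_le_one.mp (hperm.nodup_iff.mpr hl) g⟩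
  have hl₀ : b l₀ ∈ monSpan K gen Q := by
    rwa [hb, ← Submodule.smul_mem_iff _ hc, ← hmon]
  exact hQl (hQ _ _ hperm ((mem_monSpan_iff hcomm hb hQ).mp hl₀ l₀ (by simp)))

end PermInvariant

lemma monSpan_inf_le {Q Q' : List G → Prop} (hQ : ∀ l l', l.Perm l' → Q l → Q l')
    (hQ' : ∀ l l', l.Perm l' → Q' l → Q' l') :
    monSpan K gen Q ⊓ monSpan K gen Q' ≤ monSpan K gen fun l => Q l ∧ Q' l :=
  fun _ ⟨hw, hw'⟩ =>
    (mem_monSpan_iff hcomm hb fun l l' hp h => ⟨hQ l l' hp h.1, hQ' l l' hp h.2⟩).mpr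
      fun l₀ hl₀ => ⟨(mem_monSpan_iff hcomm hb hQ).mp hw l₀ hl₀,
        (mem_monSpan_iff hcomm hb hQ').mp hw' l₀ hl₀⟩

lemma mon_notMem_monIdeal {S : Set G} {l : List G} (hl : l.Nodup) (hlS : ∀ g ∈ l, g ∉ S) :
    mon gen l ∉ monIdeal K gen S :=
  mon_notMem_monSpan hcomm hb (fun _ _ hp ⟨g, hg, hgS⟩ => ⟨g, hp.subset hg, hgS⟩) hl
    fun ⟨g, hg, hgS⟩ => hlS g hg hgS

lemma adjoin_inf_decomposables_le (S : Set G) :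
    Subalgebra.toSubmodule (Algebra.adjoin K (gen '' S)) ⊓ decomposables K gen ≤
      monIdeal K gen S := by
  refine (inf_le_inf (adjoin_le_monSpan S) le_rfl).trans ?_
  refine (monSpan_inf_le hcomm hb (fun _ _ hp h g hg => h g (hp.symm.subset hg))
    (fun _ _ hp h => hp.length_eq ▸ h)).trans (monSpan_mono ?_)
  rintro (_ | ⟨g, l⟩) ⟨hS, hlen⟩
  · simp at hlen
  · exact ⟨g, List.mem_cons_self .., hS g (List.mem_cons_self ..)⟩

end FreeGCA

section Derivations

variable {K A G : Type} [Field K] [Ring A] [Algebra K A] {gen : G → A} {dg : G → ℤ} {r : ℤ}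
  {D : A →ₗ[K] A}

lemma gen_mem_grading (g : G) : gen g ∈ grading K gen dg (dg g) :=
  Submodule.subset_span ⟨[g], by simp, by simp [mon]⟩

lemma IsGradedDer.map_one (hD : IsGradedDer K gen dg r D) : D 1 = 0 := by
  simpa using hD.2 0 1 1 (Submodule.subset_span ⟨[], rfl, rfl⟩)

lemma IsGradedDer.map_mon_mem (hD : IsGradedDer K gen dg r D) {I : Submodule K A} :
    ∀ l : List G, (∀ g ∈ l, ∀ a, D (gen g) * a ∈ I) → (∀ g ∈ l, ∀ w ∈ I, gen g * w ∈ I) →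
      D (mon gen l) ∈ I
  | [], _, _ => by simp [hD.map_one]
  | g :: t, hd, hmul => by
    rw [mon_cons, hD.2 _ _ _ (gen_mem_grading g)]
    have ht := hD.map_mon_mem t (fun g hg => hd g (List.mem_cons_of_mem _ hg))
      fun g hg => hmul g (List.mem_cons_of_mem _ hg)
    exact I.add_mem (hd g (List.mem_cons_self ..) _)
      (I.smul_mem _ (hmul g (List.mem_cons_self ..) _ ht))

/-- Even generators are central, so the multiples of even generators form a two-sided ideal. -/
lemma IsGradedDer.map_mon_mem_span_gen_mul (hD : IsGradedDer K gen dg r D)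
    (hcomm : GradedComm K gen dg) {X : Set G} (hX : ∀ h ∈ X, Even (dg h)) {l : List G}
    (hl : ∀ g ∈ l, D (gen g) ∈ Submodule.span K (gen '' X)) :
    D (mon gen l) ∈ Submodule.span K {a | ∃ h ∈ X, ∃ z, a = gen h * z} := by
  set I := Submodule.span K {a | ∃ h ∈ X, ∃ z, a = gen h * z}
  refine hD.map_mon_mem l (fun g hg a => ?_) fun g _ w hw => ?_
  · have : Submodule.span K (gen '' X) ≤ I.comap (LinearMap.mulRight K a) := by
      refine Submodule.span_le.mpr ?_
      rintro _ ⟨h, hh, rfl⟩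
      exact Submodule.subset_span ⟨h, hh, a, rfl⟩
    exact this (hl g hg)
  · have : I ≤ I.comap (LinearMap.mulLeft K (gen g)) := by
      refine Submodule.span_le.mpr ?_
      rintro _ ⟨h, hh, z, rfl⟩
      show gen g * (gen h * z) ∈ I
      rw [← mul_assoc, gen_mul_gen_comm_of_even hcomm g (hX h hh), mul_assoc]
      exact Submodule.subset_span ⟨h, hh, _, rfl⟩
    exact this hw

end Derivations

section PathModel

variable {K A P E O : Type} [Field K] [Ring A] [Algebra K A] [Ring P] [Algebra K P]
  {gen : E ⊕ O → A} {pgen : (E ⊕ O) ⊕ (E ⊕ O) ⊕ (E ⊕ O) → P} {dA : A →ₗ[K] A}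
  {dP : P →ₗ[K] P} {i1 i2 : A →ₐ[K] P}

lemma d_gen_mem_monIdeal_of_pure_minimal [NeZero (2 : K)] [LinearOrder (E ⊕ O)]
    {dg : E ⊕ O → ℤ} (hcomm : GradedComm K gen dg) {b : Module.Basis (SortedReduced dg) K A}
    (hb : ∀ l, b l = mon gen l.1) (hpure_even : ∀ i, dA (gen (Sum.inl i)) = 0)
    (hpure_odd : ∀ j, dA (gen (Sum.inr j)) ∈ Algebra.adjoin K (Set.range fun i => gen (Sum.inl i)))
    (hminimal : ∀ g, dA (gen g) ∈ decomposables K gen) :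
    ∀ g, dA (gen g) ∈ monIdeal K gen (Set.range Sum.inl)
  | .inl i => by simp [hpure_even]
  | .inr j => adjoin_inf_decomposables_le hcomm hb _
      ⟨by rw [← Set.range_comp]; exact hpure_odd j, hminimal _⟩

lemma d_mem_monIdeal_of_mem_adjoin {pdg : (E ⊕ O) ⊕ (E ⊕ O) ⊕ (E ⊕ O) → ℤ}
    (hspan : Submodule.span K (Set.range (mon pgen)) = ⊤) (hdP : IsGradedDer K pgen pdg 1 dP)
    (hi1 : ∀ g, i1 (gen g) = pgen (Sum.inl g)) (hi2 : ∀ g, i2 (gen g) = pgen (Sum.inr (Sum.inl g)))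
    (hdP1 : ∀ a, dP (i1 a) = i1 (dA a)) (hdP2 : ∀ a, dP (i2 a) = i2 (dA a))
    (hdA : ∀ g, dA (gen g) ∈ monIdeal K gen (Set.range Sum.inl)) {w : P}
    (hw : w ∈ Algebra.adjoin K ((Set.range fun g => i1 (gen g)) ∪ Set.range fun g => i2 (gen g))) :
    dP w ∈ monIdeal K pgen (Set.range fun j : O => Sum.inr (Sum.inl (Sum.inr j)))ᶜ := by
  set N := monIdeal K pgen (Set.range fun j : O => Sum.inr (Sum.inl (Sum.inr j)))ᶜ
  set C : Set ((E ⊕ O) ⊕ (E ⊕ O) ⊕ (E ⊕ O)) :=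
    Set.range Sum.inl ∪ Set.range fun g => Sum.inr (Sum.inl g)
  have hdC : ∀ h ∈ C, dP (pgen h) ∈ N := by
    rintro _ (⟨g, rfl⟩ | ⟨g, rfl⟩)
    · rw [← hi1, hdP1]
      exact map_mem_monIdeal i1 hi1 (by rintro _ ⟨i, rfl⟩; simp) (hdA g)
    · rw [← hi2, hdP2]
      exact map_mem_monIdeal i2 hi2 (by rintro _ ⟨i, rfl⟩; simp) (hdA g)
  have hC : monSpan K pgen (fun l => ∀ h ∈ l, h ∈ C) ≤ N.comap dP := by
    refine Submodule.span_le.mpr ?_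
    rintro _ ⟨l, hl, rfl⟩
    exact hdP.map_mon_mem l (fun h hh a => mul_mem_monIdeal_right hspan a (hdC h (hl h hh)))
      fun _ _ _ hw => mul_mem_monIdeal_left hspan _ hw
  have hsub : ((Set.range fun g => i1 (gen g)) ∪ Set.range fun g => i2 (gen g)) ⊆ pgen '' C := by
    rintro _ (⟨g, rfl⟩ | ⟨g, rfl⟩)
    · exact ⟨_, Or.inl ⟨g, rfl⟩, (hi1 g).symm⟩
    · exact ⟨_, Or.inr ⟨g, rfl⟩, (hi2 g).symm⟩
  exact hC (adjoin_le_monSpan C (Algebra.adjoin_mono hsub hw))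

lemma d_susp_of_d_eq_zero {s : P →ₗ[K] P} {g : E ⊕ O} (hdP1 : ∀ a, dP (i1 a) = i1 (dA a))
    (hg : dA (gen g) = 0) {N : ℕ}
    (hN : dP (pgen (Sum.inr (Sum.inr g))) = i2 (gen g) - i1 (gen g) -
      ∑ i ∈ Finset.Icc 1 N, ((i.factorial : K)⁻¹) • ((s ∘ₗ dP) ^ i) (i1 (gen g))) :
    dP (pgen (Sum.inr (Sum.inr g))) = i2 (gen g) - i1 (gen g) := by
  rw [hN, sub_eq_self]
  refine Finset.sum_eq_zero fun i hi => ?_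
  obtain ⟨k, rfl⟩ := Nat.exists_eq_add_of_le' (Finset.mem_Icc.mp hi).1
  rw [pow_succ, Module.End.mul_apply, LinearMap.comp_apply, hdP1, hg]
  simp

lemma map_d_mon_susp_mem_monIdeal {pdg : (E ⊕ O) ⊕ (E ⊕ O) ⊕ (E ⊕ O) → ℤ}
    (hspan : Submodule.span K (Set.range (mon pgen)) = ⊤) (hdP : IsGradedDer K pgen pdg 1 dP)
    (hPcomm : GradedComm K pgen pdg)
    (heven : ∀ i, Even (pdg (Sum.inl (Sum.inl i))) ∧ Even (pdg (Sum.inr (Sum.inl (Sum.inl i)))))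
    (hi1 : ∀ g, i1 (gen g) = pgen (Sum.inl g)) (hi2 : ∀ g, i2 (gen g) = pgen (Sum.inr (Sum.inl g)))
    (hds : ∀ i, dP (pgen (Sum.inr (Sum.inr (Sum.inl i)))) = i2 (gen (Sum.inl i)) - i1 (gen (Sum.inl i)))
    {ξ : P →ₗ[K] P} (hξ : ∀ a b z, ξ (i1 a * i2 b * z) = i1 a * i2 b * ξ z) (l : List E) :
    ξ (dP (mon pgen (l.map fun i => Sum.inr (Sum.inr (Sum.inl i))))) ∈
      monIdeal K pgen (Set.range fun j : O => Sum.inr (Sum.inl (Sum.inr j)))ᶜ := by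
  set X : Set ((E ⊕ O) ⊕ (E ⊕ O) ⊕ (E ⊕ O)) :=
    Set.range (fun i => Sum.inl (Sum.inl i)) ∪ Set.range fun i => Sum.inr (Sum.inl (Sum.inl i))
  have hdm : dP (mon pgen (l.map fun i => Sum.inr (Sum.inr (Sum.inl i)))) ∈
      Submodule.span K {a | ∃ h ∈ X, ∃ z, a = pgen h * z} := by
    refine hdP.map_mon_mem_span_gen_mul hPcomm ?_ ?_
    · rintro _ (⟨i, rfl⟩ | ⟨i, rfl⟩)
      exacts [(heven i).1, (heven i).2]
    · simp only [List.mem_map]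
      rintro _ ⟨i, -, rfl⟩
      rw [hds, hi1, hi2]
      exact Submodule.sub_mem _ (Submodule.subset_span ⟨_, Or.inr ⟨i, rfl⟩, rfl⟩)
        (Submodule.subset_span ⟨_, Or.inl ⟨i, rfl⟩, rfl⟩)
  refine map_mem_monIdeal_of_map_gen_mul hspan ?_ ?_ hdm
  · rintro _ (⟨i, rfl⟩ | ⟨i, rfl⟩) z
    · simpa [hi1] using hξ (gen (Sum.inl i)) 1 z
    · simpa [hi2] using hξ 1 (gen (Sum.inl i)) z
  · rintro _ (⟨i, rfl⟩ | ⟨i, rfl⟩) ⟨j, hj⟩ <;> simp at hj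

end PathModel

theorem path_model_shriek_nonzero_general
    (K A P : Type) [Field K] [CharZero K] [Ring A] [Algebra K A] [Ring P] [Algebra K P]
    (p q : ℕ) [LinearOrder (Fin p ⊕ Fin q)] [LinearOrder ((Fin p ⊕ Fin q) ⊕ (Fin p ⊕ Fin q) ⊕ (Fin p ⊕ Fin q))]
    -- the pure minimal Sullivan algebra (∧V, d)
    (gen : Fin p ⊕ Fin q → A) (dg : Fin p ⊕ Fin q → ℤ)
    (heven : ∀ i : Fin p, Even (dg (Sum.inl i)))
    (hfree : IsFreeGCAOn K gen dg) (hcomm : GradedComm K gen dg)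
    (dA : A →ₗ[K] A)
    (hpure_even : ∀ i : Fin p, dA (gen (Sum.inl i)) = 0)
    (hpure_odd : ∀ j : Fin q, dA (gen (Sum.inr j)) ∈
      Algebra.adjoin K (Set.range fun i : Fin p => gen (Sum.inl i)))
    (hminimal : ∀ g, dA (gen g) ∈ decomposables K gen)
    -- the path-space model P = ∧V ⊗ ∧V ⊗ ∧sV, free on two copies of V and on sV
    (pgen : (Fin p ⊕ Fin q) ⊕ (Fin p ⊕ Fin q) ⊕ (Fin p ⊕ Fin q) → P)
    (pdg : (Fin p ⊕ Fin q) ⊕ (Fin p ⊕ Fin q) ⊕ (Fin p ⊕ Fin q) → ℤ)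
    (hpdg : ∀ g, pdg (Sum.inl g) = dg g ∧ pdg (Sum.inr (Sum.inl g)) = dg g ∧
      pdg (Sum.inr (Sum.inr g)) = dg g - 1)
    (hPfree : IsFreeGCAOn K pgen pdg) (hPcomm : GradedComm K pgen pdg)
    -- the two inclusions ∧V → ∧V ⊗ ∧V ⊆ P
    (i1 i2 : A →ₐ[K] P)
    (hi1 : ∀ g, i1 (gen g) = pgen (Sum.inl g))
    (hi2 : ∀ g, i2 (gen g) = pgen (Sum.inr (Sum.inl g)))
    -- the degree -1 derivation s with s(v⊗1) = sv, s(1⊗v) = 0, s(sv) = 0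
    (sder : P →ₗ[K] P)
    -- the differential of the path model
    (dP : P →ₗ[K] P) (hdP : IsDifferential K pgen pdg dP)
    (hdP1 : ∀ a : A, dP (i1 a) = i1 (dA a)) (hdP2 : ∀ a : A, dP (i2 a) = i2 (dA a))
    (hdPs : ∀ g, ∃ N : ℕ, (∀ i : ℕ, N < i → ((sder ∘ₗ dP) ^ i) (i1 (gen g)) = 0) ∧
      dP (pgen (Sum.inr (Sum.inr g))) =
        i2 (gen g) - i1 (gen g) -
          ∑ i ∈ Finset.Icc 1 N, ((i.factorial : K)⁻¹) • ((sder ∘ₗ dP) ^ i) (i1 (gen g)))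
    -- the ∧V⊗∧V-linear cocycle η of some degree n₀, with values in ∧V⊗∧V
    (η : P →ₗ[K] P) (n₀ : ℤ)
    -- the normalization η(sx_1⋯sx_p) = (1⊗y_1 − y_1⊗1)⋯(1⊗y_q − y_q⊗1)
    (hηval : η (mon pgen (List.ofFn fun i : Fin p => Sum.inr (Sum.inr (Sum.inl i)))) =
      (List.ofFn fun j : Fin q =>
        i2 (gen (Sum.inr j)) - i1 (gen (Sum.inr j))).prod) :
    -- conclusion: η is not a coboundary, i.e. [η] ≠ 0 in Ext_{∧V⊗∧V}(∧V, ∧V⊗∧V)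
    ¬ ∃ ξ : P →ₗ[K] P,
        (∀ (a b : A) (z : P), ξ (i1 a * i2 b * z) = i1 a * i2 b * ξ z) ∧
        (∀ z, ξ z ∈ Algebra.adjoin K
          ((Set.range fun g => i1 (gen g)) ∪ Set.range fun g => i2 (gen g))) ∧
        (∀ (t : ℤ) (z : P), z ∈ grading K pgen pdg t →
          ξ z ∈ grading K pgen pdg (t + (n₀ - 1))) ∧
        (∀ z, η z = dP (ξ z) - ((-1 : K) ^ (n₀ - 1)) • ξ (dP z)) := by
  rintro ⟨ξ, hξlin, hξtarget, -, hξeq⟩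
  obtain ⟨bA, hbA⟩ := hfree
  obtain ⟨bP, hbP⟩ := hPfree
  have hspan := span_range_mon_eq_top hbP
  set yR : Fin q → (Fin p ⊕ Fin q) ⊕ (Fin p ⊕ Fin q) ⊕ (Fin p ⊕ Fin q) :=
    fun j => Sum.inr (Sum.inl (Sum.inr j))
  set N := monIdeal K pgen (Set.range yR)ᶜ
  set m := mon pgen (List.ofFn fun i : Fin p => Sum.inr (Sum.inr (Sum.inl i)))
  have hdξ : dP (ξ m) ∈ N :=
    d_mem_monIdeal_of_mem_adjoin hspan hdP.1 hi1 hi2 hdP1 hdP2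
      (d_gen_mem_monIdeal_of_pure_minimal hcomm hbA hpure_even hpure_odd hminimal) (hξtarget m)
  have hds : ∀ i, dP (pgen (Sum.inr (Sum.inr (Sum.inl i)))) =
      i2 (gen (Sum.inl i)) - i1 (gen (Sum.inl i)) := fun i =>
    let ⟨_, _, h⟩ := hdPs (Sum.inl i)
    d_susp_of_d_eq_zero hdP1 (hpure_even i) h
  have hξdm : ξ (dP m) ∈ N := by
    simpa only [← List.ofFn_eq_map] using map_d_mon_susp_mem_monIdeal hspan hdP.1 hPcomm
      (fun i => by simp [hpdg, heven]) hi1 hi2 hds hξlin (List.finRange p)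
  have hηm : η m - mon pgen (List.ofFn yR) ∈ N := by
    have := prod_sub_sub_mon_mem_monIdeal hspan (S := (Set.range yR)ᶜ)
      (e₁ := fun j => Sum.inl (Sum.inr j)) (e₂ := yR) (fun _ ⟨_, hj⟩ => Sum.inr_ne_inl hj)
      (List.finRange q)
    simpa [hηval, List.ofFn_eq_map, hi1, hi2] using this
  have hmon : mon pgen (List.ofFn yR) ∈ N := by
    have := N.sub_mem (N.sub_mem hdξ (N.smul_mem ((-1 : K) ^ (n₀ - 1)) hξdm)) hηm
    rwa [← hξeq, sub_sub_cancel] at this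
  exact mon_notMem_monIdeal hPcomm hbP (List.nodup_ofFn.mpr fun _ _ h => by simpa [yR] using h)
    (by simp) hmon

/-- Let `(∧V, d)` be a pure minimal Sullivan algebra with `dim V < ∞`,
with even-degree generators `x_1, …, x_p` and odd-degree generators `y_1, …, y_q`.
In the relative Sullivan model `(∧V ⊗ ∧V ⊗ ∧sV, d)` of the multiplication map
`∧V ⊗ ∧V → ∧V` (where `d(sv) = 1⊗v - v⊗1 - Σ_{i≥1} (sd)^i/i! (v⊗1)`), any
`∧V⊗∧V`-linear cocycle `η` satisfying
`η(sx_1⋯sx_p) = (1⊗y_1 - y_1⊗1)⋯(1⊗y_q - y_q⊗1)` represents a nonzero class in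
`Ext_{∧V⊗∧V}(∧V, ∧V⊗∧V)`. -/
theorem path_model_shriek_nonzero
    (K A P : Type) [Field K] [CharZero K] [Ring A] [Algebra K A] [Ring P] [Algebra K P]
    (p q : ℕ) [LinearOrder (Fin p ⊕ Fin q)] [LinearOrder ((Fin p ⊕ Fin q) ⊕ (Fin p ⊕ Fin q) ⊕ (Fin p ⊕ Fin q))]
    -- the pure minimal Sullivan algebra (∧V, d)
    (gen : Fin p ⊕ Fin q → A) (dg : Fin p ⊕ Fin q → ℤ) (hpos : ∀ g, 1 ≤ dg g)
    (heven : ∀ i : Fin p, Even (dg (Sum.inl i))) (hodd : ∀ j : Fin q, Odd (dg (Sum.inr j)))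
    (hfree : IsFreeGCAOn K gen dg) (hcomm : GradedComm K gen dg)
    (dA : A →ₗ[K] A) (hdA : IsDifferential K gen dg dA)
    (hpure_even : ∀ i : Fin p, dA (gen (Sum.inl i)) = 0)
    (hpure_odd : ∀ j : Fin q, dA (gen (Sum.inr j)) ∈
      Algebra.adjoin K (Set.range fun i : Fin p => gen (Sum.inl i)))
    (hminimal : ∀ g, dA (gen g) ∈ decomposables K gen)
    -- the path-space model P = ∧V ⊗ ∧V ⊗ ∧sV, free on two copies of V and on sV
    (pgen : (Fin p ⊕ Fin q) ⊕ (Fin p ⊕ Fin q) ⊕ (Fin p ⊕ Fin q) → P)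
    (pdg : (Fin p ⊕ Fin q) ⊕ (Fin p ⊕ Fin q) ⊕ (Fin p ⊕ Fin q) → ℤ)
    (hpdg : ∀ g, pdg (Sum.inl g) = dg g ∧ pdg (Sum.inr (Sum.inl g)) = dg g ∧
      pdg (Sum.inr (Sum.inr g)) = dg g - 1)
    (hPfree : IsFreeGCAOn K pgen pdg) (hPcomm : GradedComm K pgen pdg)
    -- the two inclusions ∧V → ∧V ⊗ ∧V ⊆ P
    (i1 i2 : A →ₐ[K] P)
    (hi1 : ∀ g, i1 (gen g) = pgen (Sum.inl g))
    (hi2 : ∀ g, i2 (gen g) = pgen (Sum.inr (Sum.inl g)))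
    -- the degree -1 derivation s with s(v⊗1) = sv, s(1⊗v) = 0, s(sv) = 0
    (sder : P →ₗ[K] P) (hsder : IsGradedDer K pgen pdg (-1) sder)
    (hs1 : ∀ g, sder (pgen (Sum.inl g)) = pgen (Sum.inr (Sum.inr g)))
    (hs2 : ∀ g, sder (pgen (Sum.inr (Sum.inl g))) = 0)
    (hs3 : ∀ g, sder (pgen (Sum.inr (Sum.inr g))) = 0)
    -- the differential of the path model
    (dP : P →ₗ[K] P) (hdP : IsDifferential K pgen pdg dP)
    (hdP1 : ∀ a : A, dP (i1 a) = i1 (dA a)) (hdP2 : ∀ a : A, dP (i2 a) = i2 (dA a))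
    (hdPs : ∀ g, ∃ N : ℕ, (∀ i : ℕ, N < i → ((sder ∘ₗ dP) ^ i) (i1 (gen g)) = 0) ∧
      dP (pgen (Sum.inr (Sum.inr g))) =
        i2 (gen g) - i1 (gen g) -
          ∑ i ∈ Finset.Icc 1 N, ((i.factorial : K)⁻¹) • ((sder ∘ₗ dP) ^ i) (i1 (gen g)))
    -- the ∧V⊗∧V-linear cocycle η of some degree n₀, with values in ∧V⊗∧V
    (η : P →ₗ[K] P) (n₀ : ℤ)
    (hηlin : ∀ (a b : A) (z : P), η (i1 a * i2 b * z) = i1 a * i2 b * η z)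
    (hηtarget : ∀ z, η z ∈ Algebra.adjoin K
      ((Set.range fun g => i1 (gen g)) ∪ Set.range fun g => i2 (gen g)))
    (hηdeg : ∀ (t : ℤ) (z : P), z ∈ grading K pgen pdg t → η z ∈ grading K pgen pdg (t + n₀))
    (hηcocycle : ∀ z, dP (η z) = ((-1 : K) ^ n₀) • η (dP z))
    -- the normalization η(sx_1⋯sx_p) = (1⊗y_1 − y_1⊗1)⋯(1⊗y_q − y_q⊗1)
    (hηval : η (mon pgen (List.ofFn fun i : Fin p => Sum.inr (Sum.inr (Sum.inl i)))) =
      (List.ofFn fun j : Fin q =>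
        i2 (gen (Sum.inr j)) - i1 (gen (Sum.inr j))).prod) :
    -- conclusion: η is not a coboundary, i.e. [η] ≠ 0 in Ext_{∧V⊗∧V}(∧V, ∧V⊗∧V)
    ¬ ∃ ξ : P →ₗ[K] P,
        (∀ (a b : A) (z : P), ξ (i1 a * i2 b * z) = i1 a * i2 b * ξ z) ∧
        (∀ z, ξ z ∈ Algebra.adjoin K
          ((Set.range fun g => i1 (gen g)) ∪ Set.range fun g => i2 (gen g))) ∧
        (∀ (t : ℤ) (z : P), z ∈ grading K pgen pdg t →
          ξ z ∈ grading K pgen pdg (t + (n₀ - 1))) ∧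
        (∀ z, η z = dP (ξ z) - ((-1 : K) ^ (n₀ - 1)) • ξ (dP z)) :=
  path_model_shriek_nonzero_general K A P p q gen dg heven hfree hcomm dA hpure_even hpure_odd
    hminimal pgen pdg hpdg hPfree hPcomm i1 i2 hi1 hi2 sder dP hdP hdP1 hdP2 hdPs η n₀ hηval

end Brane
end
end

section
/- Let K be a field of characteristic zero, k a positive even integer, and M = K(ℤ, 2n) with 2n > k, with Sullivan model (∧x, 0). Let M(T) = (∧x ⊗ ∧s^{k-1}x ⊗ ∧sx ⊗ ∧ss^{k-1}x, 0) be the model of map(S^{k-1}×S^1, M) and M(S^k) = (∧x ⊗ ∧s^kx, 0) the model of map(S^k, M). Then the dual of the S^k-brane coproduct δ^∨: M(S^k) → M(T) is given by δ^∨(α) = s^{k-1}x · ι(α), where ι is the algebra map with ι(x) = x and ι(s^kx) = ss^{k-1}x. -/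
/-!
The composite `φ ∘ incl*` agrees with `jT ∘ ι` on the generators `x, s^kx` of the free algebra
`M(S^k)`, hence everywhere: `φ (incl* α)` lies in the copy of `M(T)` and never involves `s^kx`.
By `M(T)`-linearity of `γ ⊗ id`, `δ^∨ α = ι α · γ(1) = ι α · s^{k-1}x`, and `ι α`, a polynomial
in the even generators `x` and `ss^{k-1}x`, commutes with `s^{k-1}x`.
-/

noncomputable section
namespace Brane

section FreeGCA

variable {K A B G : Type} [Field K] [Ring A] [Algebra K A] [Ring B] [Algebra K B]

theorem mon_mem_adjoin_range (gen : G → A) (l : List G) :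
    mon gen l ∈ Algebra.adjoin K (Set.range gen) :=
  Subalgebra.list_prod_mem _ <| List.forall_mem_map.2 fun i _ ↦ Algebra.subset_adjoin ⟨i, rfl⟩

variable [LinearOrder G] {gen : G → A} {dg : G → ℤ}

theorem IsFreeGCAOn.adjoin_range_eq_top (h : IsFreeGCAOn K gen dg) :
    Algebra.adjoin K (Set.range gen) = ⊤ := by
  obtain ⟨b, hb⟩ := h
  have hspan : Submodule.span K (Set.range b) ≤
      Subalgebra.toSubmodule (Algebra.adjoin K (Set.range gen)) := by
    rw [Submodule.span_le]
    rintro _ ⟨l, rfl⟩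
    rw [hb]
    exact mon_mem_adjoin_range gen l.1
  exact eq_top_iff.2 fun a _ ↦ hspan (b.mem_span a)

theorem IsFreeGCAOn.algHom_ext (h : IsFreeGCAOn K gen dg) {f f' : A →ₐ[K] B}
    (hf : ∀ i, f (gen i) = f' (gen i)) : f = f' :=
  AlgHom.ext_of_adjoin_eq_top h.adjoin_range_eq_top <| by
    rintro _ ⟨i, rfl⟩
    exact hf i

theorem IsFreeGCAOn.commute_algHom_apply (h : IsFreeGCAOn K gen dg) (f : A →ₐ[K] B) {c : B}
    (hc : ∀ i, Commute c (f (gen i))) (a : A) : Commute c (f a) := by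
  have ha : f a ∈ Algebra.adjoin K (f '' Set.range gen) := by
    rw [← AlgHom.map_adjoin, h.adjoin_range_eq_top]
    exact ⟨a, trivial, rfl⟩
  refine Algebra.commute_of_mem_adjoin_of_forall_mem_commute ha ?_
  rintro _ ⟨_, ⟨i, rfl⟩, rfl⟩
  exact hc i

end FreeGCA

theorem GradedComm.commute_of_even {K A G : Type} [Field K] [Ring A] [Algebra K A]
    {gen : G → A} {dg : G → ℤ} (h : GradedComm K gen dg) {i : G} (hi : Even (dg i)) (j : G) :
    Commute (gen i) (gen j) := by
  rw [Commute, SemiconjBy, h, (hi.mul_right _).neg_one_zpow, one_smul]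

theorem brane_coproduct_dual_evenEM_general
    (K Sk T B1 B2 : Type) [Field K]
    [Ring Sk] [Algebra K Sk] [Ring T] [Algebra K T] [Ring B1] [Algebra K B1]
    [Ring B2] [Algebra K B2]
    [LinearOrder (Fin 2)]
    (n k : ℕ) (hkeven : Even k)
    -- M(S^k) = ∧x ⊗ ∧s^kx  (generators x, s^kx)
    (sk : Fin 2 → Sk) (hSkfree : IsFreeGCAOn K sk ![(2 * n : ℤ), 2 * n - k])
    -- M(T) = ∧x ⊗ ∧ss^{k-1}x ⊗ ∧s^{k-1}x ⊗ ∧sx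
    -- (even generators inl 0 = x, inl 1 = ss^{k-1}x; odd inr 0 = s^{k-1}x, inr 1 = sx)
    (t : Fin 2 ⊕ Fin 2 → T)
    (hTcomm : GradedComm K t (Sum.elim ![(2 * n : ℤ), 2 * n - k] ![2 * n - k + 1, 2 * n - 1]))
    -- B1 = ∧x ⊗_{M(S^{k-1})} M(T)  (generators x, ss^{k-1}x; sx)
    (b1 : Fin 2 ⊕ Fin 1 → B1)
    -- B2 = M(D^k) ⊗_{M(S^{k-1})} M(T)
    -- (even generators inl 0 = x, inl 1 = s^kx, inl 2 = ss^{k-1}x;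
    --  odd inr 0 = s^{k-1}x, inr 1 = sx)
    (b2 : Fin 3 ⊕ Fin 2 → B2)
    -- incl* : M(S^k) → B1,  x ↦ x, s^kx ↦ ss^{k-1}x
    (incl : Sk →ₐ[K] B1) (hincl1 : incl (sk 0) = b1 (Sum.inl 0))
    (hincl2 : incl (sk 1) = b1 (Sum.inl 1))
    -- the section φ : B1 → B2 of ε̃ ⊗ id
    (φ : B1 →ₐ[K] B2) (hφ1 : φ (b1 (Sum.inl 0)) = b2 (Sum.inl 0))
    (hφ2 : φ (b1 (Sum.inl 1)) = b2 (Sum.inl 2))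
    -- the embedding of M(T) in B2
    (jT : T →ₐ[K] B2) (hjT1 : jT (t (Sum.inl 0)) = b2 (Sum.inl 0))
    (hjT2 : jT (t (Sum.inl 1)) = b2 (Sum.inl 2))
    -- γ ⊗ id : B2 → M(T): M(T)-linear, γ(1) = s^{k-1}x, γ((s^kx)^l) = 0 for l ≥ 1
    (g : B2 →ₗ[K] T)
    (hglin : ∀ (u : T) (z : B2), g (jT u * z) = u * g z)
    (hg1 : g 1 = t (Sum.inr 0))
    -- the algebra map ι : M(S^k) → M(T), x ↦ x, s^kx ↦ ss^{k-1}x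
    (ι : Sk →ₐ[K] T) (hι1 : ι (sk 0) = t (Sum.inl 0)) (hι2 : ι (sk 1) = t (Sum.inl 1)) :
    ∀ α : Sk, g (φ (incl α)) = t (Sum.inr 0) * ι α := by
  have hι : ∀ i, ι (sk i) = t (Sum.inl i) := by
    intro i
    fin_cases i
    exacts [hι1, hι2]
  have hfactor : φ.comp incl = jT.comp ι := hSkfree.algHom_ext fun i ↦ by
    fin_cases i <;> simp [hincl1, hincl2, hφ1, hφ2, hjT1, hjT2, hι]
  have heven : ∀ i, Even (Sum.elim ![(2 * n : ℤ), 2 * n - k] ![2 * n - k + 1, 2 * n - 1]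
      (Sum.inl i)) := by
    intro i
    fin_cases i
    · exact even_two_mul (n : ℤ)
    · exact (even_two_mul (n : ℤ)).sub (by exact_mod_cast hkeven)
  have hcomm : ∀ α, Commute (t (Sum.inr 0)) (ι α) := hSkfree.commute_algHom_apply ι fun i ↦ by
    rw [hι]
    exact (hTcomm.commute_of_even (heven i) _).symm
  intro α
  calc g (φ (incl α)) = g (jT (ι α) * 1) := by rw [mul_one, ← AlgHom.comp_apply, hfactor]; rfl
    _ = ι α * t (Sum.inr 0) := by rw [hglin, hg1]
    _ = t (Sum.inr 0) * ι α := (hcomm α).symm.eq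

/-- Let `K` be a field of characteristic zero, `k` a positive even
integer, and `M = K(ℤ, 2n)` with `2n > k`, with Sullivan model `(∧x, 0)`.  Let
`M(T) = ∧x ⊗ ∧s^{k-1}x ⊗ ∧sx ⊗ ∧ss^{k-1}x` (zero differential) be the model of
`map(S^{k-1}×S^1, M)` and `M(S^k) = ∧x ⊗ ∧s^kx` the model of `map(S^k, M)`.
Then the dual of the `S^k`-brane coproduct, i.e. the composition
`M(S^k) --incl*--> ∧x ⊗_{M(S^{k-1})} M(T) --φ--> M(D^k) ⊗_{M(S^{k-1})} M(T)
--γ⊗id--> M(T)` (with the section `φ` and the shriek representative `γ`, `γ(1) =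
s^{k-1}x`, `γ((s^kx)^l) = 0` for `l ≥ 1`), is given by `δ^∨(α) = s^{k-1}x · ι(α)`,
where `ι` is the algebra map with `ι(x) = x` and `ι(s^kx) = ss^{k-1}x`. -/
theorem brane_coproduct_dual_evenEM
    (K Sk T B1 B2 : Type) [Field K] [CharZero K]
    [Ring Sk] [Algebra K Sk] [Ring T] [Algebra K T] [Ring B1] [Algebra K B1]
    [Ring B2] [Algebra K B2]
    [LinearOrder (Fin 2)] [LinearOrder (Fin 2 ⊕ Fin 2)]
    [LinearOrder (Fin 2 ⊕ Fin 1)] [LinearOrder (Fin 3 ⊕ Fin 2)]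
    (n k : ℕ) (hk : 0 < k) (hkeven : Even k) (hnk : k < 2 * n)
    -- M(S^k) = ∧x ⊗ ∧s^kx  (generators x, s^kx)
    (sk : Fin 2 → Sk) (hSkfree : IsFreeGCAOn K sk ![(2 * n : ℤ), 2 * n - k])
    (hSkcomm : GradedComm K sk ![(2 * n : ℤ), 2 * n - k])
    -- M(T) = ∧x ⊗ ∧ss^{k-1}x ⊗ ∧s^{k-1}x ⊗ ∧sx
    -- (even generators inl 0 = x, inl 1 = ss^{k-1}x; odd inr 0 = s^{k-1}x, inr 1 = sx)
    (t : Fin 2 ⊕ Fin 2 → T)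
    (hTfree : IsFreeGCAOn K t (Sum.elim ![(2 * n : ℤ), 2 * n - k] ![2 * n - k + 1, 2 * n - 1]))
    (hTcomm : GradedComm K t (Sum.elim ![(2 * n : ℤ), 2 * n - k] ![2 * n - k + 1, 2 * n - 1]))
    -- B1 = ∧x ⊗_{M(S^{k-1})} M(T)  (generators x, ss^{k-1}x; sx)
    (b1 : Fin 2 ⊕ Fin 1 → B1)
    (hB1free : IsFreeGCAOn K b1 (Sum.elim ![(2 * n : ℤ), 2 * n - k] ![2 * n - 1]))
    (hB1comm : GradedComm K b1 (Sum.elim ![(2 * n : ℤ), 2 * n - k] ![2 * n - 1]))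
    -- B2 = M(D^k) ⊗_{M(S^{k-1})} M(T)
    -- (even generators inl 0 = x, inl 1 = s^kx, inl 2 = ss^{k-1}x;
    --  odd inr 0 = s^{k-1}x, inr 1 = sx)
    (b2 : Fin 3 ⊕ Fin 2 → B2)
    (hB2free : IsFreeGCAOn K b2
      (Sum.elim ![(2 * n : ℤ), 2 * n - k, 2 * n - k] ![2 * n - k + 1, 2 * n - 1]))
    (hB2comm : GradedComm K b2
      (Sum.elim ![(2 * n : ℤ), 2 * n - k, 2 * n - k] ![2 * n - k + 1, 2 * n - 1]))
    -- incl* : M(S^k) → B1,  x ↦ x, s^kx ↦ ss^{k-1}x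
    (incl : Sk →ₐ[K] B1) (hincl1 : incl (sk 0) = b1 (Sum.inl 0))
    (hincl2 : incl (sk 1) = b1 (Sum.inl 1))
    -- the section φ : B1 → B2 of ε̃ ⊗ id
    (φ : B1 →ₐ[K] B2) (hφ1 : φ (b1 (Sum.inl 0)) = b2 (Sum.inl 0))
    (hφ2 : φ (b1 (Sum.inl 1)) = b2 (Sum.inl 2)) (hφ3 : φ (b1 (Sum.inr 0)) = b2 (Sum.inr 1))
    -- the embedding of M(T) in B2
    (jT : T →ₐ[K] B2) (hjT1 : jT (t (Sum.inl 0)) = b2 (Sum.inl 0))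
    (hjT2 : jT (t (Sum.inl 1)) = b2 (Sum.inl 2))
    (hjT3 : jT (t (Sum.inr 0)) = b2 (Sum.inr 0)) (hjT4 : jT (t (Sum.inr 1)) = b2 (Sum.inr 1))
    -- γ ⊗ id : B2 → M(T): M(T)-linear, γ(1) = s^{k-1}x, γ((s^kx)^l) = 0 for l ≥ 1
    (g : B2 →ₗ[K] T)
    (hglin : ∀ (u : T) (z : B2), g (jT u * z) = u * g z)
    (hg1 : g 1 = t (Sum.inr 0))
    (hg2 : ∀ z : B2, g (b2 (Sum.inl 1) * z) = 0)
    -- the algebra map ι : M(S^k) → M(T), x ↦ x, s^kx ↦ ss^{k-1}x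
    (ι : Sk →ₐ[K] T) (hι1 : ι (sk 0) = t (Sum.inl 0)) (hι2 : ι (sk 1) = t (Sum.inl 1)) :
    ∀ α : Sk, g (φ (incl α)) = t (Sum.inr 0) * ι α :=
  brane_coproduct_dual_evenEM_general K Sk T B1 B2 n k hkeven sk hSkfree t hTcomm b1 b2 incl hincl1
    hincl2 φ hφ1 hφ2 jT hjT1 hjT2 g hglin hg1 ι hι1 hι2

end Brane
end
end

section
/- Let K be a field of characteristic zero, k a positive even integer, n > k/2, and M = K(ℤ, 2n). Then the composition δ^∨ ∘ μ^∨ of the duals of the S^k-brane product and coproduct (computed on Sullivan models as above) satisfies (δ^∨ ∘ μ^∨)(sx) = −s^{k-1}x ≠ 0; in particular the composition μ_{S^k} ∘ δ_{S^k} of the S^k-brane product and S^k-brane coproduct on homology is nontrivial. -/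
noncomputable section
namespace Brane

/-! `μ^∨(sx) = μ^∨(sx · 1) = -ρ(1) = -1` and `δ^∨(-1) = -s^{k-1}x · ι(1) = -s^{k-1}x`, which is
nonzero because the generator `s^{k-1}x` is a basis monomial of the free algebra `M(T)`. -/

theorem IsFreeGCAOn.gen_ne_zero {K A G : Type} [Field K] [Ring A] [Algebra K A] [LinearOrder G]
    {gen : G → A} {dg : G → ℤ} (h : IsFreeGCAOn K gen dg) (g : G) : gen g ≠ 0 := by
  obtain ⟨b, hb⟩ := h
  have hg := b.ne_zero ⟨[g], List.pairwise_singleton _ _,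
    fun g' _ => List.count_le_length.trans List.length_singleton.le⟩
  simpa [hb, mon] using hg

theorem coproduct_dual_comp_product_dual_apply {K S T E : Type} [CommRing K]
    [Ring S] [Algebra K S] [Ring T] [Algebra K T] [Ring E] [Algebra K E]
    (j : E →ₐ[K] T) (ρ : E →ₐ[K] S) (ι : S →ₐ[K] T) {a b : T}
    (δ : S →ₗ[K] T) (hδ : ∀ α, δ α = a * ι α)
    (μ : T →ₗ[K] S) (hμ : ∀ β, μ (b * j β) = -ρ β) :
    δ (μ b) = -a := by
  have hμb : μ b = -1 := by simpa using hμ 1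
  rw [hμb, map_neg, hδ, map_one, mul_one]

theorem brane_prod_coprod_composition_nontrivial_general
    (K Sk T E : Type) [Field K]
    [Ring Sk] [Algebra K Sk] [Ring T] [Algebra K T] [Ring E] [Algebra K E]
    [LinearOrder (Fin 2 ⊕ Fin 2)]
    (n k : ℕ)
    -- M(T): even generators inl 0 = x, inl 1 = ss^{k-1}x; odd inr 0 = s^{k-1}x, inr 1 = sx
    (t : Fin 2 ⊕ Fin 2 → T)
    (hTfree : IsFreeGCAOn K t (Sum.elim ![(2 * n : ℤ), 2 * n - k] ![2 * n - k + 1, 2 * n - 1]))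
    -- the even part E = ∧x ⊗ ∧ss^{k-1}x, its embedding jE into M(T), and ρ
    (jE : E →ₐ[K] T)
    (ρ : E →ₐ[K] Sk)
    -- ι : M(S^k) → M(T), x ↦ x, s^kx ↦ ss^{k-1}x, and the coproduct dual δ^∨
    (ι : Sk →ₐ[K] T)
    (δ : Sk →ₗ[K] T) (hδ : ∀ α : Sk, δ α = t (Sum.inr 0) * ι α)
    -- the product dual μ^∨
    (μ : T →ₗ[K] Sk)
    (hμb : ∀ β : E, μ (t (Sum.inr 1) * jE β) = - ρ β) :
    δ (μ (t (Sum.inr 1))) = - t (Sum.inr 0) ∧ t (Sum.inr 0) ≠ 0 ∧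
      ∃ z : T, δ (μ z) ≠ 0 := by
  have hcomp := coproduct_dual_comp_product_dual_apply jE ρ ι δ hδ μ hμb
  have hne : t (Sum.inr 0) ≠ 0 := hTfree.gen_ne_zero _
  exact ⟨hcomp, hne, t (Sum.inr 1), by rwa [hcomp, neg_ne_zero]⟩

/-- Let `K` be a field of characteristic zero, `k` a positive even
integer, `n > k/2`, and `M = K(ℤ, 2n)`.  With `M(T) = ∧x ⊗ ∧s^{k-1}x ⊗ ∧sx ⊗ ∧ss^{k-1}x`
(zero differential) the model of `map(S^{k-1}×S^1, M)` and `M(S^k) = ∧x ⊗ ∧s^kx` the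
model of `map(S^k, M)`, the composition `δ^∨ ∘ μ^∨` of the duals of the `S^k`-brane
product and coproduct — where `δ^∨(α) = s^{k-1}x · ι(α)` with `ι(x) = x`,
`ι(s^kx) = ss^{k-1}x`, and `μ^∨(β) = 0`, `μ^∨(sx·β) = −ρ(β)`,
`μ^∨(s^{k-1}x·β) = μ^∨(sx·s^{k-1}x·β) = 0` for `β ∈ ∧x ⊗ ∧ss^{k-1}x`, with `ρ(x) = x`,
`ρ(ss^{k-1}x) = s^kx` — satisfies `(δ^∨ ∘ μ^∨)(sx) = −s^{k-1}x ≠ 0`; in particular the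
composition `μ_{S^k} ∘ δ_{S^k}` (this composition on the models, the differentials being
zero so that they compute the operations on (co)homology) is nontrivial. -/
theorem brane_prod_coprod_composition_nontrivial
    (K Sk T E : Type) [Field K] [CharZero K]
    [Ring Sk] [Algebra K Sk] [Ring T] [Algebra K T] [Ring E] [Algebra K E]
    [LinearOrder (Fin 2)] [LinearOrder (Fin 2 ⊕ Fin 2)]
    (n k : ℕ) (hk : 0 < k) (hkeven : Even k) (hnk : k < 2 * n)
    -- M(S^k) = ∧x ⊗ ∧s^kx
    (sk : Fin 2 → Sk) (hSkfree : IsFreeGCAOn K sk ![(2 * n : ℤ), 2 * n - k])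
    (hSkcomm : GradedComm K sk ![(2 * n : ℤ), 2 * n - k])
    -- M(T): even generators inl 0 = x, inl 1 = ss^{k-1}x; odd inr 0 = s^{k-1}x, inr 1 = sx
    (t : Fin 2 ⊕ Fin 2 → T)
    (hTfree : IsFreeGCAOn K t (Sum.elim ![(2 * n : ℤ), 2 * n - k] ![2 * n - k + 1, 2 * n - 1]))
    (hTcomm : GradedComm K t (Sum.elim ![(2 * n : ℤ), 2 * n - k] ![2 * n - k + 1, 2 * n - 1]))
    -- the even part E = ∧x ⊗ ∧ss^{k-1}x, its embedding jE into M(T), and ρ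
    (e : Fin 2 → E) (hEfree : IsFreeGCAOn K e ![(2 * n : ℤ), 2 * n - k])
    (hEcomm : GradedComm K e ![(2 * n : ℤ), 2 * n - k])
    (jE : E →ₐ[K] T) (hjE1 : jE (e 0) = t (Sum.inl 0)) (hjE2 : jE (e 1) = t (Sum.inl 1))
    (ρ : E →ₐ[K] Sk) (hρ1 : ρ (e 0) = sk 0) (hρ2 : ρ (e 1) = sk 1)
    -- ι : M(S^k) → M(T), x ↦ x, s^kx ↦ ss^{k-1}x, and the coproduct dual δ^∨
    (ι : Sk →ₐ[K] T) (hι1 : ι (sk 0) = t (Sum.inl 0)) (hι2 : ι (sk 1) = t (Sum.inl 1))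
    (δ : Sk →ₗ[K] T) (hδ : ∀ α : Sk, δ α = t (Sum.inr 0) * ι α)
    -- the product dual μ^∨
    (μ : T →ₗ[K] Sk)
    (hμ0 : ∀ β : E, μ (jE β) = 0)
    (hμb : ∀ β : E, μ (t (Sum.inr 1) * jE β) = - ρ β)
    (hμa : ∀ β : E, μ (t (Sum.inr 0) * jE β) = 0)
    (hμab : ∀ β : E, μ (t (Sum.inr 1) * (t (Sum.inr 0) * jE β)) = 0) :
    δ (μ (t (Sum.inr 1))) = - t (Sum.inr 0) ∧ t (Sum.inr 0) ≠ 0 ∧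
      ∃ z : T, δ (μ z) ≠ 0 :=
  brane_prod_coprod_composition_nontrivial_general K Sk T E n k t hTfree jE ρ ι δ hδ μ hμb

end Brane
end
end
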